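/- arXiv:1809.01246 — 2 statements merged into one kernel-verified Lean document; each statement's English description precedes it below -/
import Mathlib

section
/- Let m, F be natural numbers with m > 0 and F > 0, and let Q, Q' : ℕ → ℕ be arbitrary functions (giving the linear-congruential value used at a fixed index, as a function of the fingerprint). Let Hs₁, Hs₂, Hd₁, Hd₂ be natural numbers all strictly less than m·F. Suppose: (i) Hs₁ mod F = Hs₂ mod F and Hd₁ mod F = Hd₂ mod F (equal fingerprint pairs); (ii) (⌊Hs₁/F⌋ + Q (Hs₁ mod F)) mod m = (⌊Hs₂/F⌋ + Q (Hs₂ mod F)) mod m (stored in the same row with the same row index); (iii) (⌊Hd₁/F⌋ + Q' (Hd₁ mod F)) mod m = (⌊Hd₂/F⌋ + Q' (Hd₂ mod F)) mod m (stored in the same column with the same column index). Then Hs₁ = Hs₂ and Hd₁ = Hd₂. (This is Theorem 1: the storage of the graph sketch in GSS is accurate — two edges are merged in a bucket only if they are the same edge of the graph sketch.) -/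
lemma aux_cancel (m : ℕ) (a b q : ℕ) (ha : a < m) (hb : b < m)
    (h : (a + q) % m = (b + q) % m) : a = b := by
  have h' : a ≡ b [MOD m] := Nat.ModEq.add_right_cancel' q h
  have : a % m = b % m := h'
  rwa [Nat.mod_eq_of_lt ha, Nat.mod_eq_of_lt hb] at this

lemma aux_eq (m F : ℕ) (hF : 0 < F) (Q : ℕ → ℕ) (H₁ H₂ : ℕ)
    (h₁ : H₁ < m * F) (h₂ : H₂ < m * F)
    (hf : H₁ % F = H₂ % F)
    (hr : (H₁ / F + Q (H₁ % F)) % m = (H₂ / F + Q (H₂ % F)) % m) : H₁ = H₂ := by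
  have d₁ : H₁ / F < m := Nat.div_lt_of_lt_mul (by rwa [Nat.mul_comm] at h₁)
  have d₂ : H₂ / F < m := Nat.div_lt_of_lt_mul (by rwa [Nat.mul_comm] at h₂)
  rw [hf] at hr
  have := aux_cancel m _ _ _ d₁ d₂ hr
  have e1 := Nat.div_add_mod H₁ F
  have e2 := Nat.div_add_mod H₂ F
  rw [this, hf] at e1
  omega

/-- Theorem 1: the storage of the graph sketch in GSS is accurate.
If two edges have equal fingerprint pairs and are stored in the same row and
column (computed from address + LR value of the fingerprint, modulo `m`),
then they are the same edge of the graph sketch. -/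
theorem gss_storage_accurate (m F : ℕ) (hm : 0 < m) (hF : 0 < F)
    (Q Q' : ℕ → ℕ) (Hs₁ Hs₂ Hd₁ Hd₂ : ℕ)
    (hs₁ : Hs₁ < m * F) (hs₂ : Hs₂ < m * F)
    (hd₁ : Hd₁ < m * F) (hd₂ : Hd₂ < m * F)
    (hfs : Hs₁ % F = Hs₂ % F) (hfd : Hd₁ % F = Hd₂ % F)
    (hrow : (Hs₁ / F + Q (Hs₁ % F)) % m = (Hs₂ / F + Q (Hs₂ % F)) % m)
    (hcol : (Hd₁ / F + Q' (Hd₁ % F)) % m = (Hd₂ / F + Q' (Hd₂ % F)) % m) :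
    Hs₁ = Hs₂ ∧ Hd₁ = Hd₂ :=
  ⟨aux_eq m F hF Q Hs₁ Hs₂ hs₁ hs₂ hfs hrow,
   aux_eq m F hF Q' Hd₁ Hd₂ hd₁ hd₂ hfd hcol⟩
end

section
/- Let V be a finite type, let M ≥ 1 be a natural number, and let s, d, s₁, d₁, …, s_n, d_n, d'₁, …, d'_D be 2n + D + 2 pairwise distinct elements of V. The number of functions H : V → Fin M satisfying both (i) for every i ∈ {1, …, n}, not both H(sᵢ) = H(s) and H(dᵢ) = H(d), and (ii) for every j ∈ {1, …, D}, H(d'ⱼ) ≠ H(d), equals (M² − 1)^n · (M − 1)^D · M^(|V| − 2n − D). Consequently, under the uniform distribution on functions, the probability P that the edge (s, d) suffers no edge collision is (1 − 1/M²)^n · (1 − 1/M)^D. -/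
/-!
Restricting a hash function `H : V → β` to the `2n + D + 2` distinct nodes involved loses no
information about collisions, and the remaining `|V| - 2n - D - 2` values are free. Once the
hash values `(a, b)` of `s` and `d` are fixed, each disjoint edge independently avoids the one
forbidden pair `(a, b)` among `|β|²` pairs, and each adjacent edge avoids the one forbidden value
`b` among `|β|`.
-/

open Finset Function

theorem card_filter_forall_ne {ι α : Type*} [Fintype ι] [DecidableEq ι] [Fintype α]
    [DecidableEq α] (c : α) :
    #{f : ι → α | ∀ i, f i ≠ c} = (Fintype.card α - 1) ^ Fintype.card ι := by
  have : ({f : ι → α | ∀ i, f i ≠ c} : Finset _) = Fintype.piFinset fun _ => univ.erase c := by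
    ext f; simp
  rw [this, Fintype.card_piFinset, prod_const, card_erase_of_mem (mem_univ c), card_univ,
    card_univ]

theorem card_filter_comp_of_injective {ι V β : Type*} [Fintype ι] [DecidableEq ι] [Fintype V]
    [DecidableEq V] [Fintype β] {g : ι → V} (hg : Injective g) (P : (ι → β) → Prop)
    [DecidablePred P] :
    #{H : V → β | P (H ∘ g)} =
      #{f : ι → β | P f} * Fintype.card β ^ (Fintype.card V - Fintype.card ι) := by
  let e : (V → β) ≃ (ι → β) × ({v // v ∉ Set.range g} → β) :=
    (Equiv.piEquivPiSubtypeProd (· ∈ Set.range g) fun _ => β).trans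
      (((Equiv.ofInjective g hg).arrowCongr (Equiv.refl β)).symm.prodCongr (Equiv.refl _))
  have : #{H : V → β | P (H ∘ g)} =
      #(({f : ι → β | P f} : Finset _) ×ˢ (univ : Finset ({v // v ∉ Set.range g} → β))) :=
    card_equiv e fun H => by simp [e]; rfl
  rw [this, card_product, card_univ, Fintype.card_fun, Fintype.card_subtype_compl,
    Set.card_range_of_injective hg]

/-- `t = ((a, b), u, w)` collects the hash values of the edge `(s, d)`, of the disjoint edges and
of the far endpoints of the adjacent edges. -/
def IsCollisionFree {κ μ β : Type*} (t : (β × β) × (κ → β × β) × (μ → β)) : Prop :=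
  (∀ i, t.2.1 i ≠ t.1) ∧ ∀ j, t.2.2 j ≠ t.1.2

instance {κ μ β : Type*} [Fintype κ] [Fintype μ] [DecidableEq β] :
    DecidablePred (IsCollisionFree : (β × β) × (κ → β × β) × (μ → β) → Prop) :=
  fun _ => inferInstanceAs (Decidable (_ ∧ _))

theorem card_filter_isCollisionFree {κ μ β : Type*} [Fintype κ] [DecidableEq κ] [Fintype μ]
    [DecidableEq μ] [Fintype β] [DecidableEq β] :
    #{t : (β × β) × (κ → β × β) × (μ → β) | IsCollisionFree t} =
      Fintype.card β ^ 2 *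
        ((Fintype.card β ^ 2 - 1) ^ Fintype.card κ * (Fintype.card β - 1) ^ Fintype.card μ) := by
  have fiber (p : β × β) :
      #{y : (κ → β × β) × (μ → β) | IsCollisionFree (p, y)} =
        (Fintype.card β ^ 2 - 1) ^ Fintype.card κ * (Fintype.card β - 1) ^ Fintype.card μ := by
    have : ({y | IsCollisionFree (p, y)} : Finset ((κ → β × β) × (μ → β))) =
        ({u | ∀ i, u i ≠ p} : Finset _) ×ˢ ({w | ∀ j, w j ≠ p.2} : Finset _) := by
      ext; simp only [mem_filter, mem_univ, true_and, mem_product]; rfl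
    rw [this, card_product, card_filter_forall_ne, card_filter_forall_ne, Fintype.card_prod, sq]
  rw [card_filter, Fintype.sum_prod_type]
  simp only [← card_filter, fiber, sum_const, card_univ, Fintype.card_prod, smul_eq_mul, sq]

/-- Splits a tuple `(x₀, x₁, u₁, …, uₙ, v₁, …, vₙ, w₁, …, w_D)` into
`((x₀, x₁), ((uᵢ, vᵢ))ᵢ, (wⱼ)ⱼ)`. -/
def splitTupleEquiv (β : Type*) (n D : ℕ) :
    (Fin (n + n + D + 1 + 1) → β) ≃ (β × β) × (Fin n → β × β) × (Fin D → β) :=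
  (Fin.consEquiv fun _ => β).symm.trans <|
  ((Equiv.refl β).prodCongr (Fin.consEquiv fun _ => β).symm).trans <|
  (Equiv.prodAssoc β β _).symm.trans <|
  (Equiv.refl (β × β)).prodCongr <|
  (Fin.appendEquiv (n + n) D).symm.trans <|
  ((Fin.appendEquiv n n).symm.trans (Equiv.arrowProdEquivProdArrow _ _ _).symm).prodCongr
    (Equiv.refl _)

theorem splitTupleEquiv_comp {V β : Type*} {n D : ℕ} (H : V → β) (s d : V)
    (se de : Fin n → V) (de' : Fin D → V) :
    splitTupleEquiv β n D (H ∘ Fin.cons s (Fin.cons d (Fin.append (Fin.append se de) de'))) =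
      ((H s, H d), fun i => (H (se i), H (de i)), fun j => H (de' j)) := by
  simp [splitTupleEquiv, Fin.tail, Equiv.arrowProdEquivProdArrow, -Fin.natAdd_eq_addNat,
    Fin.append_right]

theorem card_filter_no_collision {V β : Type*} [Fintype V] [DecidableEq V] [Fintype β]
    [DecidableEq β] {n D : ℕ} (s d : V) (se de : Fin n → V) (de' : Fin D → V)
    (hdist : (s :: d :: (List.ofFn se ++ List.ofFn de ++ List.ofFn de')).Nodup) :
    #{H : V → β | (∀ i, ¬(H (se i) = H s ∧ H (de i) = H d)) ∧ ∀ j, H (de' j) ≠ H d} =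
      (Fintype.card β ^ 2 - 1) ^ n * (Fintype.card β - 1) ^ D *
        Fintype.card β ^ (Fintype.card V - 2 * n - D) := by
  set g : Fin (n + n + D + 1 + 1) → V :=
    Fin.cons s (Fin.cons d (Fin.append (Fin.append se de) de'))
  have hg : Injective g := by
    rw [← List.nodup_ofFn]
    simpa [g, List.ofFn_succ, List.ofFn_fin_append] using hdist
  have hcard : n + n + D + 1 + 1 ≤ Fintype.card V := by
    simpa using Fintype.card_le_of_injective g hg
  calc #{H : V → β | (∀ i, ¬(H (se i) = H s ∧ H (de i) = H d)) ∧ ∀ j, H (de' j) ≠ H d}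
      = #{H : V → β | IsCollisionFree (splitTupleEquiv β n D (H ∘ g))} := by
        congr 1
        ext H
        simp [g, splitTupleEquiv_comp, IsCollisionFree, Prod.ext_iff]
    _ = #{t : (β × β) × (Fin n → β × β) × (Fin D → β) | IsCollisionFree t} *
          Fintype.card β ^ (Fintype.card V - (n + n + D + 1 + 1)) := by
        rw [card_filter_comp_of_injective hg fun f => IsCollisionFree (splitTupleEquiv β n D f),
          Fintype.card_fin]
        congr 1
        exact card_equiv (splitTupleEquiv β n D) (by simp)
    _ = _ := by
        rw [card_filter_isCollisionFree, Fintype.card_fin, Fintype.card_fin,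
          show Fintype.card V - 2 * n - D = Fintype.card V - (n + n + D + 1 + 1) + 2 by omega,
          pow_add]
        ring

theorem cast_no_collision_count_div_pow {M n D k : ℕ} (hM : 1 ≤ M) (hk : 2 * n + D ≤ k) :
    (((M ^ 2 - 1) ^ n * (M - 1) ^ D * M ^ (k - 2 * n - D) : ℕ) : ℝ) / (M : ℝ) ^ k =
      (1 - 1 / (M : ℝ) ^ 2) ^ n * (1 - 1 / (M : ℝ)) ^ D := by
  obtain ⟨r, rfl⟩ := Nat.exists_eq_add_of_le hk
  have hM0 : (M : ℝ) ≠ 0 := by positivity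
  rw [show 2 * n + D + r - 2 * n - D = r by omega, one_sub_div hM0,
    one_sub_div (pow_ne_zero 2 hM0), div_pow, div_pow, pow_add, pow_add, pow_mul]
  push_cast [Nat.cast_sub hM, Nat.cast_sub (Nat.one_le_pow 2 M hM)]
  field_simp

/-- Counting hash functions under which the edge `(s, d)` suffers no edge
collision: none of the `n` disjoint edges `(se i, de i)` collides with
`(s, d)` and none of the `D` adjacent edges `(s, de' j)` collides with
`(s, d)` (all `2n + D + 2` involved nodes pairwise distinct). The count is
`(M² - 1)^n * (M - 1)^D * M^(|V| - 2n - D)`, and the corresponding uniform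
probability is `(1 - 1/M²)^n * (1 - 1/M)^D`. -/
theorem gss_edge_no_collision_count
    (V : Type*) [Fintype V] [DecidableEq V] (M n D : ℕ) (hM : 1 ≤ M)
    (s d : V) (se de : Fin n → V) (de' : Fin D → V)
    (hdist : (s :: d :: (List.ofFn se ++ List.ofFn de ++ List.ofFn de')).Nodup) :
    (Finset.univ.filter
        (fun H : V → Fin M =>
          (∀ i : Fin n, ¬(H (se i) = H s ∧ H (de i) = H d)) ∧
          (∀ j : Fin D, H (de' j) ≠ H d))).card
      = (M ^ 2 - 1) ^ n * (M - 1) ^ D * M ^ (Fintype.card V - 2 * n - D) ∧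
    ((Finset.univ.filter
        (fun H : V → Fin M =>
          (∀ i : Fin n, ¬(H (se i) = H s ∧ H (de i) = H d)) ∧
          (∀ j : Fin D, H (de' j) ≠ H d))).card : ℝ)
        / ((M : ℝ) ^ Fintype.card V)
      = (1 - 1 / (M : ℝ) ^ 2) ^ n * (1 - 1 / (M : ℝ)) ^ D := by
  have hcount := card_filter_no_collision (β := Fin M) s d se de de' hdist
  rw [Fintype.card_fin] at hcount
  have hcard : 2 * n + D ≤ Fintype.card V := by
    have := hdist.length_le_card
    simp only [List.length_cons, List.length_append, List.length_ofFn] at this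
    omega
  exact ⟨hcount, by rw [hcount, cast_no_collision_count_div_pow hM hcard]⟩
end
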